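/- arXiv:1908.02094 — 3 statements merged into one kernel-verified Lean document; each statement's English description precedes it below -/
import Mathlib

section
/- Let A ∈ ℝ^{n×n} be symmetric, g ∈ ℝ^n, Δ > 0, and q(s) = gᵀs + (1/2)sᵀAs. A vector s_opt with ‖s_opt‖ ≤ Δ is a global minimizer of q over the closed ball {s ∈ ℝ^n : ‖s‖ ≤ Δ} if and only if there exists a scalar λ_opt ≥ 0 such that (A + λ_opt·I)·s_opt = −g, λ_opt·(Δ − ‖s_opt‖) = 0, and A + λ_opt·I is positive semidefinite. -/
open Matrix

noncomputable section

/-- Euclidean 2-norm of a finitely indexed real vector. -/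
def enorm2 {ι : Type*} [Fintype ι] (v : ι → ℝ) : ℝ := ‖(WithLp.equiv 2 (ι → ℝ)).symm v‖

lemma enorm2_sq {ι : Type*} [Fintype ι] (v : ι → ℝ) : enorm2 v ^ 2 = v ⬝ᵥ v := by
  rw [enorm2, ← Real.sqrt_sq (norm_nonneg _), EuclideanSpace.norm_eq, Real.sqrt_sq (by positivity),
    Real.sq_sqrt (by positivity)]
  simp [dotProduct, Real.norm_eq_abs, sq_abs, pow_two]

lemma enorm2_nonneg' {ι : Type*} [Fintype ι] (v : ι → ℝ) : 0 ≤ enorm2 v := norm_nonneg _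

lemma enorm2_le_iff {ι : Type*} [Fintype ι] (v : ι → ℝ) {Δ : ℝ} (hΔ : 0 ≤ Δ) :
    enorm2 v ≤ Δ ↔ v ⬝ᵥ v ≤ Δ ^ 2 := by
  constructor
  · intro h; nlinarith [enorm2_sq v, enorm2_nonneg' v]
  · intro h; nlinarith [enorm2_sq v, enorm2_nonneg' v]

lemma enorm2_eq_iff {ι : Type*} [Fintype ι] (v : ι → ℝ) {Δ : ℝ} (hΔ : 0 ≤ Δ) :
    enorm2 v = Δ ↔ v ⬝ᵥ v = Δ ^ 2 := by
  constructor
  · intro h; nlinarith [enorm2_sq v, enorm2_nonneg' v]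
  · intro h; nlinarith [enorm2_sq v, enorm2_nonneg' v]

lemma enorm2_add_le {ι : Type*} [Fintype ι] (v w : ι → ℝ) : enorm2 (v + w) ≤ enorm2 v + enorm2 w :=
  norm_add_le ((WithLp.equiv 2 (ι → ℝ)).symm v) ((WithLp.equiv 2 (ι → ℝ)).symm w)

lemma enorm2_smul' {ι : Type*} [Fintype ι] (c : ℝ) (v : ι → ℝ) : enorm2 (c • v) = |c| * enorm2 v := by
  rw [enorm2, enorm2,
    show (WithLp.equiv 2 (ι → ℝ)).symm (c • v) = c • (WithLp.equiv 2 (ι → ℝ)).symm v from rfl,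
    norm_smul, Real.norm_eq_abs]

section Helpers
variable {n : ℕ} (A : Matrix (Fin n) (Fin n) ℝ)

lemma dot_mulVec_symm (hA : A.IsSymm) (x y : Fin n → ℝ) :
    x ⬝ᵥ A.mulVec y = y ⬝ᵥ A.mulVec x := by
  rw [dotProduct_mulVec, ← mulVec_transpose, hA.eq, dotProduct_comm]

lemma quad_expand (hA : A.IsSymm) (g : Fin n → ℝ) (q : (Fin n → ℝ) → ℝ)
    (hq : ∀ s, q s = g ⬝ᵥ s + (1 / 2) * (s ⬝ᵥ A.mulVec s)) (x w : Fin n → ℝ) (t : ℝ) :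
    q (x + t • w) = q x + t * ((g + A.mulVec x) ⬝ᵥ w) + t ^ 2 / 2 * (w ⬝ᵥ A.mulVec w) := by
  rw [hq, hq]
  rw [mulVec_add, mulVec_smul]
  simp only [dotProduct_add, add_dotProduct, smul_dotProduct, dotProduct_smul, smul_eq_mul]
  rw [dot_mulVec_symm A hA w x, show (A.mulVec x) ⬝ᵥ w = x ⬝ᵥ A.mulVec w from by
    rw [dotProduct_comm, dot_mulVec_symm A hA]]
  ring

lemma dot_expand (x w : Fin n → ℝ) (t : ℝ) :
    (x + t • w) ⬝ᵥ (x + t • w) = x ⬝ᵥ x + 2 * t * (x ⬝ᵥ w) + t ^ 2 * (w ⬝ᵥ w) := by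
  simp only [dotProduct_add, add_dotProduct, smul_dotProduct, dotProduct_smul, smul_eq_mul]
  rw [dotProduct_comm w x]; ring

lemma dotProduct_self_nonneg' (v : Fin n → ℝ) : 0 ≤ v ⬝ᵥ v := by
  nlinarith [enorm2_sq v, enorm2_nonneg' v]

lemma quadform_expand (hA : A.IsSymm) (x w : Fin n → ℝ) (t : ℝ) :
    (x + t • w) ⬝ᵥ A.mulVec (x + t • w) =
      x ⬝ᵥ A.mulVec x + 2 * t * (x ⬝ᵥ A.mulVec w) + t ^ 2 * (w ⬝ᵥ A.mulVec w) := by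
  rw [mulVec_add, mulVec_smul]
  simp only [dotProduct_add, add_dotProduct, smul_dotProduct, dotProduct_smul, smul_eq_mul]
  rw [dot_mulVec_symm A hA w x]
  ring

end Helpers

lemma nonneg_of_poly_nonneg_Ioc {a b c d : ℝ}
    (h : ∀ ε : ℝ, ε ∈ Set.Ioc (0:ℝ) 1 → 0 ≤ a + b * ε + c * ε ^ 2 + d * ε ^ 3) :
    0 ≤ a := by
  have hco : Continuous fun ε : ℝ => a + b * ε + c * ε ^ 2 + d * ε ^ 3 := by
    have h1 : Continuous fun ε : ℝ => b * ε := continuous_const.mul continuous_id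
    have h2 : Continuous fun ε : ℝ => c * ε ^ 2 := continuous_const.mul (continuous_pow 2)
    have h3 : Continuous fun ε : ℝ => d * ε ^ 3 := continuous_const.mul (continuous_pow 3)
    exact ((continuous_const.add h1).add h2).add h3
  have hlim : Filter.Tendsto (fun ε : ℝ => a + b * ε + c * ε ^ 2 + d * ε ^ 3)
      (nhdsWithin (0:ℝ) (Set.Ioi 0)) (nhds (a + b * 0 + c * 0 ^ 2 + d * 0 ^ 3)) :=
    (hco.tendsto 0).mono_left nhdsWithin_le_nhds
  have hev : ∀ᶠ ε in nhdsWithin (0:ℝ) (Set.Ioi 0),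
      0 ≤ a + b * ε + c * ε ^ 2 + d * ε ^ 3 := by
    filter_upwards [Ioc_mem_nhdsGT zero_lt_one] with ε hε using h ε hε
  have := ge_of_tendsto hlim hev
  linarith [this]


set_option maxHeartbeats 2000000 in
/-- A vector `s_opt` with `‖s_opt‖ ≤ Δ` is a global minimizer of
`q(s) = gᵀs + (1/2) sᵀAs` over the closed ball of radius `Δ` if and only if there exists
`λ_opt ≥ 0` with `(A + λ_opt I) s_opt = -g`, `λ_opt (Δ - ‖s_opt‖) = 0` and
`A + λ_opt I` positive semidefinite. -/
theorem stmt_0 {n : ℕ} (A : Matrix (Fin n) (Fin n) ℝ) (hA : A.IsSymm)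
    (g : Fin n → ℝ) (Δ : ℝ) (hΔ : 0 < Δ)
    (q : (Fin n → ℝ) → ℝ)
    (hq : ∀ s, q s = g ⬝ᵥ s + (1 / 2) * (s ⬝ᵥ A.mulVec s))
    (sopt : Fin n → ℝ) (hsopt : enorm2 sopt ≤ Δ) :
    (∀ s : Fin n → ℝ, enorm2 s ≤ Δ → q sopt ≤ q s) ↔
      ∃ lamopt : ℝ, 0 ≤ lamopt ∧
        (A + lamopt • (1 : Matrix (Fin n) (Fin n) ℝ)).mulVec sopt = -g ∧
        lamopt * (Δ - enorm2 sopt) = 0 ∧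
        (A + lamopt • (1 : Matrix (Fin n) (Fin n) ℝ)).PosSemidef := by
  constructor
  · intro hmin
    obtain ⟨r, hrdef⟩ : ∃ r : Fin n → ℝ, r = g + A.mulVec sopt := ⟨_, rfl⟩
    rcases lt_or_eq_of_le hsopt with hlt | heqΔ
    · -- interior case
      have key : ∀ (w : Fin n → ℝ) (t : ℝ), |t| * enorm2 w ≤ Δ - enorm2 sopt →
          0 ≤ t * (r ⬝ᵥ w) + t ^ 2 / 2 * (w ⬝ᵥ A.mulVec w) := by
        intro w t ht
        have hfe : enorm2 (sopt + t • w) ≤ Δ := by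
          calc enorm2 (sopt + t • w) ≤ enorm2 sopt + enorm2 (t • w) := enorm2_add_le _ _
            _ = enorm2 sopt + |t| * enorm2 w := by rw [enorm2_smul']
            _ ≤ Δ := by linarith
        have h := hmin _ hfe
        rw [quad_expand A hA g q hq] at h
        rw [hrdef]
        linarith
      have hApsd : ∀ w, 0 ≤ w ⬝ᵥ A.mulVec w := by
        intro w
        set t := (Δ - enorm2 sopt) / (enorm2 w + 1) with htdef
        have hw1 : 0 < enorm2 w + 1 := by linarith [enorm2_nonneg' w]
        have ht : 0 < t := div_pos (by linarith) hw1
        have hb : |t| * enorm2 w ≤ Δ - enorm2 sopt := by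
          rw [abs_of_pos ht]
          calc t * enorm2 w ≤ t * (enorm2 w + 1) := by nlinarith [enorm2_nonneg' w]
            _ = Δ - enorm2 sopt := by rw [htdef]; field_simp
        have hb' : |(-t)| * enorm2 w ≤ Δ - enorm2 sopt := by rwa [abs_neg]
        have h1 := key w t hb
        have h2 := key w (-t) hb'
        nlinarith [mul_pos ht ht]
      have hdot : ∀ w, r ⬝ᵥ w = 0 := by
        intro w
        by_contra hc
        have ha : 0 ≤ w ⬝ᵥ A.mulVec w := hApsd w
        have hcabs : 0 < |r ⬝ᵥ w| := abs_pos.mpr hc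
        have hw1 : 0 < enorm2 w + 1 := by linarith [enorm2_nonneg' w]
        set t0 := (Δ - enorm2 sopt) / (enorm2 w + 1) with ht0def
        have ht0 : 0 < t0 := div_pos (by linarith) hw1
        set t := min t0 (|r ⬝ᵥ w| / (w ⬝ᵥ A.mulVec w + 1)) with htdef
        have ht : 0 < t := lt_min ht0 (div_pos hcabs (by linarith))
        have hb : |t| * enorm2 w ≤ Δ - enorm2 sopt := by
          rw [abs_of_pos ht]
          calc t * enorm2 w ≤ t0 * enorm2 w := by
                nlinarith [enorm2_nonneg' w, min_le_left t0 (|r ⬝ᵥ w| / (w ⬝ᵥ A.mulVec w + 1))]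
            _ ≤ t0 * (enorm2 w + 1) := by nlinarith [enorm2_nonneg' w]
            _ = Δ - enorm2 sopt := by rw [ht0def]; field_simp
        have hb' : |(-t)| * enorm2 w ≤ Δ - enorm2 sopt := by rwa [abs_neg]
        have h1 := key w t hb
        have h2 := key w (-t) hb'
        have htle : t ≤ |r ⬝ᵥ w| / (w ⬝ᵥ A.mulVec w + 1) :=
          min_le_right _ _
        have h3 : t * (w ⬝ᵥ A.mulVec w + 1) ≤ |r ⬝ᵥ w| :=
          (le_div_iff₀ (by linarith)).mp htle
        rcases abs_cases (r ⬝ᵥ w) with ⟨hc1, _⟩ | ⟨hc1, _⟩ <;> nlinarith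
      have hr0 : r = 0 := dotProduct_self_eq_zero.mp (hdot r)
      have hg : A.mulVec sopt = -g := by
        have h2 : g + A.mulVec sopt = 0 := by rw [← hrdef]; exact hr0
        rw [add_comm] at h2
        exact eq_neg_of_add_eq_zero_left h2
      refine ⟨0, le_rfl, ?_, by ring, ?_⟩
      · rw [zero_smul, add_zero]; exact hg
      · refine posSemidef_iff_dotProduct_mulVec.mpr ⟨?_, ?_⟩
        · rw [zero_smul, add_zero]
          show Aᴴ = A
          ext i j
          rw [conjTranspose_apply, star_trivial]
          exact hA.apply i j
        · intro x
          rw [zero_smul, add_zero, star_trivial]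
          exact hApsd x
    · -- boundary case
      have heqΔ' : sopt ⬝ᵥ sopt = Δ ^ 2 := (enorm2_eq_iff sopt hΔ.le).mp heqΔ
      have key2 : ∀ w : Fin n → ℝ, 0 < w ⬝ᵥ sopt →
          (w ⬝ᵥ w) * (r ⬝ᵥ w) ≤ (w ⬝ᵥ sopt) * (w ⬝ᵥ A.mulVec w) := by
        intro w hc
        have hw0 : w ≠ 0 := by rintro rfl; simp at hc
        have hNpos : 0 < w ⬝ᵥ w :=
          lt_of_le_of_ne (dotProduct_self_nonneg' w)
            (fun h => hw0 (dotProduct_self_eq_zero.mp h.symm))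
        set N := w ⬝ᵥ w with hNdef
        set c := w ⬝ᵥ sopt with hcdef
        set t := -2 * c / N with htdef
        have htN : t * N = -2 * c := by rw [htdef]; field_simp
        have hsw : sopt ⬝ᵥ w = c := dotProduct_comm sopt w
        have hfe : enorm2 (sopt + t • w) ≤ Δ := by
          rw [enorm2_le_iff _ hΔ.le, dot_expand, heqΔ', hsw, ← hNdef]
          have ht2 : t ^ 2 * N = t * (t * N) := by ring
          rw [ht2, htN]
          nlinarith
        have h := hmin _ hfe
        rw [quad_expand A hA g q hq] at h
        have hkey : 0 ≤ t * (r ⬝ᵥ w) + t ^ 2 / 2 * (w ⬝ᵥ A.mulVec w) := by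
          rw [hrdef]; linarith
        have hkeyN : 0 ≤ (t * (r ⬝ᵥ w) + t ^ 2 / 2 * (w ⬝ᵥ A.mulVec w)) * N ^ 2 :=
          mul_nonneg hkey (by positivity)
        have hid : (t * (r ⬝ᵥ w) + t ^ 2 / 2 * (w ⬝ᵥ A.mulVec w)) * N ^ 2
            = -2 * c * (N * (r ⬝ᵥ w)) + 2 * c ^ 2 * (w ⬝ᵥ A.mulVec w) := by
          linear_combination ((r ⬝ᵥ w) * N + (w ⬝ᵥ A.mulVec w) / 2 * (t * N - 2 * c)) * htN
        nlinarith [hc, hkeyN, hid]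
      -- Step A : r ⬝ᵥ sopt ≤ 0, hence lam ≥ 0
      have hrs0 : r ⬝ᵥ sopt ≤ 0 := by
        have hstep : ∀ β : ℝ, β ∈ Set.Ioc (0:ℝ) 1 →
            r ⬝ᵥ sopt ≤ β * (sopt ⬝ᵥ A.mulVec sopt) / 2 := by
          rintro β ⟨hβ0, hβ1⟩
          have hfe : enorm2 ((1 - β) • sopt) ≤ Δ := by
            rw [enorm2_smul', abs_of_nonneg (by linarith), heqΔ]
            nlinarith
          have h := hmin _ hfe
          rw [hq, hq] at h
          simp only [dotProduct_smul, smul_dotProduct, smul_eq_mul, mulVec_smul] at h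
          have hrs' : r ⬝ᵥ sopt = g ⬝ᵥ sopt + sopt ⬝ᵥ A.mulVec sopt := by
            rw [hrdef, add_dotProduct, dotProduct_comm (A.mulVec sopt) sopt]
          rw [hrs']
          nlinarith
        have : 0 ≤ -(r ⬝ᵥ sopt) := by
          apply nonneg_of_poly_nonneg_Ioc (b := (sopt ⬝ᵥ A.mulVec sopt) / 2) (c := 0) (d := 0)
          intro ε hε
          have := hstep ε hε
          linarith
        linarith
      obtain ⟨lam, hlamdef⟩ : ∃ lam : ℝ, lam = -(r ⬝ᵥ sopt) / Δ ^ 2 := ⟨_, rfl⟩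
      have hlam : 0 ≤ lam := by
        rw [hlamdef]; exact div_nonneg (neg_nonneg.mpr hrs0) (by positivity)
      have hlamΔ : lam * Δ ^ 2 = -(r ⬝ᵥ sopt) := by rw [hlamdef]; field_simp
      obtain ⟨p, hpdef⟩ : ∃ p : Fin n → ℝ, p = r + lam • sopt := ⟨_, rfl⟩
      have hps : p ⬝ᵥ sopt = 0 := by
        rw [hpdef, add_dotProduct, smul_dotProduct, smul_eq_mul, heqΔ', hlamΔ]; ring
      have hp0 : p = 0 := by
        rw [← dotProduct_self_eq_zero]
        by_contra hne
        have hP : 0 < p ⬝ᵥ p :=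
          lt_of_le_of_ne (dotProduct_self_nonneg' p) (Ne.symm hne)
        have hrp : r ⬝ᵥ p = p ⬝ᵥ p := by
          have hr2 : r = p - lam • sopt := by rw [hpdef]; abel
          rw [hr2, sub_dotProduct, smul_dotProduct, smul_eq_mul,
            dotProduct_comm sopt p, hps]
          ring
        have hstep : ∀ ε : ℝ, 0 < ε →
            (p ⬝ᵥ p + ε ^ 2 * Δ ^ 2) * (r ⬝ᵥ p + ε * (r ⬝ᵥ sopt)) ≤
              ε * Δ ^ 2 * (p ⬝ᵥ A.mulVec p + 2 * ε * (p ⬝ᵥ A.mulVec sopt)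
                + ε ^ 2 * (sopt ⬝ᵥ A.mulVec sopt)) := by
          intro ε hε
          have hws : (p + ε • sopt) ⬝ᵥ sopt = ε * Δ ^ 2 := by
            rw [add_dotProduct, smul_dotProduct, smul_eq_mul, hps, heqΔ']; ring
          have hwpos : 0 < (p + ε • sopt) ⬝ᵥ sopt := by rw [hws]; positivity
          have h := key2 _ hwpos
          have e1 : (p + ε • sopt) ⬝ᵥ (p + ε • sopt) = p ⬝ᵥ p + ε ^ 2 * Δ ^ 2 := by
            rw [dot_expand, hps, heqΔ']; ring
          have e2 : r ⬝ᵥ (p + ε • sopt) = r ⬝ᵥ p + ε * (r ⬝ᵥ sopt) := by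
            rw [dotProduct_add, dotProduct_smul, smul_eq_mul]
          have e3 : (p + ε • sopt) ⬝ᵥ A.mulVec (p + ε • sopt)
              = p ⬝ᵥ A.mulVec p + 2 * ε * (p ⬝ᵥ A.mulVec sopt)
                + ε ^ 2 * (sopt ⬝ᵥ A.mulVec sopt) := quadform_expand A hA p sopt ε
          rw [hws, e1, e2, e3] at h
          exact h
        have hfin : (0:ℝ) ≤ -(p ⬝ᵥ p * (r ⬝ᵥ p)) := by
          apply nonneg_of_poly_nonneg_Ioc
            (b := Δ ^ 2 * (p ⬝ᵥ A.mulVec p) - (p ⬝ᵥ p) * (r ⬝ᵥ sopt))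
            (c := 2 * Δ ^ 2 * (p ⬝ᵥ A.mulVec sopt) - Δ ^ 2 * (r ⬝ᵥ p))
            (d := Δ ^ 2 * (sopt ⬝ᵥ A.mulVec sopt) - Δ ^ 2 * (r ⬝ᵥ sopt))
          intro ε hε
          have := hstep ε hε.1
          nlinarith [this]
        rw [hrp] at hfin
        nlinarith
      -- stationarity
      have hstat : (A + lam • (1 : Matrix (Fin n) (Fin n) ℝ)).mulVec sopt = -g := by
        rw [add_mulVec, smul_mulVec, one_mulVec]
        have h2 : g + (A.mulVec sopt + lam • sopt) = 0 := by
          have hp' : p = g + (A.mulVec sopt + lam • sopt) := by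
            rw [hpdef, hrdef]; abel
          rw [← hp', hp0]
        rw [add_comm] at h2
        exact eq_neg_of_add_eq_zero_left h2
      have hr2 : r = -(lam • sopt) := by
        have h2 : r + lam • sopt = 0 := by rw [← hpdef]; exact hp0
        exact eq_neg_of_add_eq_zero_left h2
      -- PSD quadratic form for vectors not orthogonal to sopt
      have hBpos : ∀ v : Fin n → ℝ, v ⬝ᵥ sopt ≠ 0 →
          0 ≤ v ⬝ᵥ A.mulVec v + lam * (v ⬝ᵥ v) := by
        intro v hv
        have hrv : r ⬝ᵥ v = -(lam * (v ⬝ᵥ sopt)) := by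
          rw [hr2, neg_dotProduct, smul_dotProduct, smul_eq_mul, dotProduct_comm sopt v]
        rcases lt_or_gt_of_ne hv with hneg | hpos
        · have hvpos : 0 < (-v) ⬝ᵥ sopt := by rw [neg_dotProduct]; linarith
          have h := key2 (-v) hvpos
          simp only [neg_dotProduct, dotProduct_neg, mulVec_neg, neg_neg] at h
          rw [hrv] at h
          nlinarith [hvpos, h]
        · have h := key2 v hpos
          rw [hrv] at h
          nlinarith
      have hBquad : ∀ w : Fin n → ℝ, 0 ≤ w ⬝ᵥ A.mulVec w + lam * (w ⬝ᵥ w) := by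
        intro w
        by_cases hw : w ⬝ᵥ sopt = 0
        · have hstep : ∀ ε : ℝ, 0 < ε →
              0 ≤ (w ⬝ᵥ A.mulVec w + lam * (w ⬝ᵥ w))
                + ε ^ 2 * (sopt ⬝ᵥ A.mulVec sopt + lam * (sopt ⬝ᵥ sopt)) := by
            intro ε hε
            have hplus : (w + ε • sopt) ⬝ᵥ sopt ≠ 0 := by
              rw [add_dotProduct, smul_dotProduct, smul_eq_mul, hw, heqΔ']
              positivity
            have hminus : (w + (-ε) • sopt) ⬝ᵥ sopt ≠ 0 := by
              rw [add_dotProduct, smul_dotProduct, smul_eq_mul, hw, heqΔ', zero_add, neg_mul]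
              exact neg_ne_zero.mpr (by positivity)
            have h1 := hBpos _ hplus
            have h2 := hBpos _ hminus
            rw [quadform_expand A hA, dot_expand] at h1 h2
            nlinarith [h1, h2]
          apply nonneg_of_poly_nonneg_Ioc (b := 0)
            (c := sopt ⬝ᵥ A.mulVec sopt + lam * (sopt ⬝ᵥ sopt)) (d := 0)
          intro ε hε
          have := hstep ε hε.1
          linarith
        · exact hBpos w hw
      refine ⟨lam, hlam, hstat, by rw [heqΔ]; ring, ?_⟩
      · refine posSemidef_iff_dotProduct_mulVec.mpr ⟨?_, ?_⟩
        · refine Matrix.IsHermitian.add ?_ ?_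
          · show Aᴴ = A
            ext i j
            rw [conjTranspose_apply, star_trivial]
            exact hA.apply i j
          · show (lam • (1 : Matrix (Fin n) (Fin n) ℝ))ᴴ = _
            rw [conjTranspose_smul, conjTranspose_one, star_trivial]
        · intro x
          rw [star_trivial, add_mulVec, smul_mulVec, one_mulVec,
            dotProduct_add, dotProduct_smul, smul_eq_mul]
          exact hBquad x
  · rintro ⟨lam, hlam, hstat, hcomp, hpsd⟩ s hs
    set B := A + lam • (1 : Matrix (Fin n) (Fin n) ℝ) with hB
    have hBmul : ∀ v, B.mulVec v = A.mulVec v + lam • v := by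
      intro v
      rw [hB, add_mulVec, smul_mulVec, one_mulVec]
    have hquad : ∀ v : Fin n → ℝ, 0 ≤ v ⬝ᵥ B.mulVec v := by
      intro v
      have := hpsd.dotProduct_mulVec_nonneg v
      simpa using this
    set d := s - sopt with hd
    have hsd : s = sopt + (1:ℝ) • d := by simp [hd]
    have hr : g + A.mulVec sopt = -(lam • sopt) := by
      have h1 : A.mulVec sopt + lam • sopt = -g := by rw [← hBmul]; exact hstat
      have h2 : g + (A.mulVec sopt + lam • sopt) = 0 := by rw [h1]; abel
      rw [← add_assoc] at h2
      exact eq_neg_of_add_eq_zero_left h2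
    have hexp : q s = q sopt + ((g + A.mulVec sopt) ⬝ᵥ d) + 1/2 * (d ⬝ᵥ A.mulVec d) := by
      rw [hsd, quad_expand A hA g q hq]; ring_nf
    have hqB := hquad d
    rw [hBmul] at hqB
    have hqB' : 0 ≤ d ⬝ᵥ A.mulVec d + lam * (d ⬝ᵥ d) := by
      rw [dotProduct_add, dotProduct_smul, smul_eq_mul] at hqB
      linarith
    have hrd : (g + A.mulVec sopt) ⬝ᵥ d = -(lam * (sopt ⬝ᵥ d)) := by
      rw [hr]; simp [smul_dotProduct]
    -- s ⬝ᵥ s  =  sopt⬝ᵥsopt + 2 sopt⬝ᵥd + d⬝ᵥd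
    have hss : s ⬝ᵥ s = sopt ⬝ᵥ sopt + 2 * (sopt ⬝ᵥ d) + d ⬝ᵥ d := by
      rw [hsd]; rw [dot_expand]; ring
    have hterm : 0 ≤ lam * (sopt ⬝ᵥ sopt - s ⬝ᵥ s) := by
      rcases eq_or_lt_of_le hlam with h0 | hpos
      · simp [← h0]
      · have hbnd : enorm2 sopt = Δ := by
          rcases mul_eq_zero.mp hcomp with h | h
          · exact absurd h (ne_of_gt hpos)
          · linarith
        have h1 : sopt ⬝ᵥ sopt = Δ ^ 2 := (enorm2_eq_iff sopt hΔ.le).mp hbnd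
        have h2 : s ⬝ᵥ s ≤ Δ ^ 2 := (enorm2_le_iff s hΔ.le).mp hs
        nlinarith
    nlinarith [hexp, hrd, hqB', hss, hterm]
end
end

section
/- For every real t with |t| < 1 and every x ∈ [−1, 1], the series Σ_{j=0}^{∞} (j+1)·t^j·U_j(x) converges and its sum equals (1 − t²)/(1 + t² − 2tx)². -/
open Polynomial

noncomputable section

private lemma U_eval_one' (j : ℕ) : (Polynomial.Chebyshev.U ℝ (j : ℤ)).eval 1 = (j : ℝ) + 1 := by
  induction j using Nat.twoStepInduction with
  | zero => simp [Polynomial.Chebyshev.U_zero]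
  | one => norm_num [Polynomial.Chebyshev.U_one]
  | more j ih1 ih2 =>
    have h : ((j + 2 : ℕ) : ℤ) = (j : ℤ) + 2 := by push_cast; ring
    rw [h, Polynomial.Chebyshev.U_add_two]
    have h1 : ((j + 1 : ℕ) : ℤ) = (j : ℤ) + 1 := by push_cast; ring
    rw [← h1] at *
    simp only [eval_sub, eval_mul, eval_X, eval_ofNat, ih1, ih2]
    push_cast
    ring

private lemma U_eval_neg_one' (j : ℕ) :
    (Polynomial.Chebyshev.U ℝ (j : ℤ)).eval (-1) = (-1 : ℝ) ^ j * ((j : ℝ) + 1) := by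
  induction j using Nat.twoStepInduction with
  | zero => simp [Polynomial.Chebyshev.U_zero]
  | one => norm_num [Polynomial.Chebyshev.U_one]
  | more j ih1 ih2 =>
    have h : ((j + 2 : ℕ) : ℤ) = (j : ℤ) + 2 := by push_cast; ring
    rw [h, Polynomial.Chebyshev.U_add_two]
    have h1 : ((j + 1 : ℕ) : ℤ) = (j : ℤ) + 1 := by push_cast; ring
    rw [← h1] at *
    simp only [eval_sub, eval_mul, eval_X, eval_ofNat, ih1, ih2]
    push_cast
    ring

private lemma hasSum_sq' (r : ℝ) (hr : |r| < 1) :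
    HasSum (fun n : ℕ => ((n : ℝ) + 1) ^ 2 * r ^ n) ((1 + r) / (1 - r) ^ 3) := by
  have hr' : ‖r‖ < 1 := by rwa [Real.norm_eq_abs]
  have hne : (1 : ℝ) - r ≠ 0 := by
    have : r < 1 := lt_of_abs_lt hr
    intro h; linarith [h]
  have h2 := hasSum_choose_mul_geometric_of_norm_lt_one 2 hr'
  have h1 := hasSum_choose_mul_geometric_of_norm_lt_one 1 hr'
  have h := (h2.mul_left 2).sub h1
  have hfg : (fun n : ℕ => ((n : ℝ) + 1) ^ 2 * r ^ n)
      = fun n : ℕ => 2 * (((n + 2).choose 2 : ℝ) * r ^ n) - ((n + 1).choose 1 : ℝ) * r ^ n := by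
    funext n
    rw [Nat.cast_choose_two, Nat.choose_one_right]
    push_cast
    ring
  have hval : (1 + r) / (1 - r) ^ 3 = 2 * (1 / (1 - r) ^ (2 + 1)) - 1 / (1 - r) ^ (1 + 1) := by
    field_simp
    ring
  rw [hfg, hval]
  exact h

/-- Generating function of the Chebyshev polynomials of the second kind: for `|t| < 1` and
`x ∈ [−1, 1]`, the series `Σ_{j≥0} (j+1) t^j U_j(x)` converges with sum
`(1 − t²)/(1 + t² − 2tx)²`. -/
theorem stmt_8 (t : ℝ) (ht : |t| < 1) (x : ℝ) (hx : x ∈ Set.Icc (-1 : ℝ) 1) :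
    HasSum (fun j : ℕ => ((j : ℝ) + 1) * t ^ j * (Polynomial.Chebyshev.U ℝ (j : ℤ)).eval x)
      ((1 - t ^ 2) / (1 + t ^ 2 - 2 * t * x) ^ 2) := by
  obtain ⟨hx1, hx2⟩ := hx
  have ht1 : -1 < t := neg_lt_of_abs_lt ht
  have ht2 : t < 1 := lt_of_abs_lt ht
  have hB : (0:ℝ) ≤ 1 + t ^ 2 + 2 * t * x := by nlinarith [sq_nonneg (t + x)]
  have hd : (0:ℝ) < 1 + t ^ 2 - 2 * t * x := by
    nlinarith [sq_nonneg (t - x), mul_pos (mul_pos (by linarith : (0:ℝ) < 1 - t)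
      (by linarith : (0:ℝ) < 1 + t)) (mul_pos (by linarith : (0:ℝ) < 1 - t)
      (by linarith : (0:ℝ) < 1 + t)), mul_nonneg (sq_nonneg t)
      (mul_nonneg (by linarith : (0:ℝ) ≤ 1 - x) (by linarith : (0:ℝ) ≤ 1 + x))]
  set θ := Real.arccos x with hθ
  have hcos : Real.cos θ = x := Real.cos_arccos hx1 hx2
  by_cases hs : Real.sin θ = 0
  · -- endpoint case: x = 1 or x = -1
    have hx2eq : (x - 1) * (x + 1) = 0 := by
      have h := Real.sin_arccos x
      rw [← hθ, hs] at h
      have h0 : 1 - x ^ 2 = 0 := by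
        have hnn : (0:ℝ) ≤ 1 - x ^ 2 := by nlinarith
        nlinarith [Real.sq_sqrt hnn, h.symm]
      nlinarith
    rcases mul_eq_zero.1 hx2eq with h | h
    · have hx0 : x = 1 := by linarith
      subst hx0
      have key := hasSum_sq' t ht
      have hfg : (fun j : ℕ => ((j : ℝ) + 1) * t ^ j * (Polynomial.Chebyshev.U ℝ (j : ℤ)).eval 1)
          = fun j : ℕ => ((j : ℝ) + 1) ^ 2 * t ^ j := by
        funext j; rw [U_eval_one']; ring
      have hval : (1 - t ^ 2) / (1 + t ^ 2 - 2 * t * 1) ^ 2 = (1 + t) / (1 - t) ^ 3 := by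
        rw [show (1:ℝ) + t ^ 2 - 2 * t * 1 = (1 - t) ^ 2 by ring]
        rw [div_eq_div_iff (pow_ne_zero _ (pow_ne_zero _ (by intro h0; linarith [h0] : (1:ℝ) - t ≠ 0)))
          (pow_ne_zero _ (by intro h0; linarith [h0] : (1:ℝ) - t ≠ 0))]
        ring
      rw [hfg, hval]
      exact key
    · have hx0 : x = -1 := by linarith
      subst hx0
      have key := hasSum_sq' (-t) (by rwa [abs_neg])
      have hfg : (fun j : ℕ => ((j : ℝ) + 1) * t ^ j *
            (Polynomial.Chebyshev.U ℝ (j : ℤ)).eval (-1))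
          = fun j : ℕ => ((j : ℝ) + 1) ^ 2 * (-t) ^ j := by
        funext j; rw [U_eval_neg_one', neg_pow]; ring
      have hval : (1 - t ^ 2) / (1 + t ^ 2 - 2 * t * (-1)) ^ 2 = (1 + -t) / (1 - -t) ^ 3 := by
        rw [show (1:ℝ) + t ^ 2 - 2 * t * (-1) = (1 - -t) ^ 2 by ring]
        rw [div_eq_div_iff (pow_ne_zero _ (pow_ne_zero _ (by intro h0; linarith [h0] : (1:ℝ) - -t ≠ 0)))
          (pow_ne_zero _ (by intro h0; linarith [h0] : (1:ℝ) - -t ≠ 0))]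
        ring
      rw [hfg, hval]
      exact key
  · -- main case
    set s := Real.sin θ with hsdef
    have hsx : s ^ 2 + x ^ 2 = 1 := by rw [← hcos]; exact Real.sin_sq_add_cos_sq θ
    set e : ℂ := Complex.exp (θ * Complex.I) with he
    have heval : e = (x : ℂ) + (s : ℂ) * Complex.I := by
      rw [he, Complex.exp_mul_I, ← Complex.ofReal_cos, ← Complex.ofReal_sin, hcos]
    set w : ℂ := (t : ℂ) * e with hwdef
    have hw : ‖w‖ < 1 := by
      rw [hwdef, norm_mul, Complex.norm_real, Real.norm_eq_abs,
        he, Complex.norm_exp_ofReal_mul_I, mul_one]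
      exact ht
    have h1w : (1 : ℂ) - w ≠ 0 := by
      intro h
      rw [sub_eq_zero] at h
      rw [← h] at hw
      simp at hw
    have hsum0 : HasSum (fun n : ℕ => ((n : ℂ) + 1) * w ^ n) (1 / (1 - w) ^ 2) := by
      have h := hasSum_choose_mul_geometric_of_norm_lt_one 1 hw
      have hfg : (fun n : ℕ => (((n + 1).choose 1 : ℕ) : ℂ) * w ^ n)
          = fun n : ℕ => ((n : ℂ) + 1) * w ^ n := by
        funext n; rw [Nat.choose_one_right]; push_cast; ring
      rw [hfg] at h
      simpa using h
    have hsum2 := Complex.hasSum_im (hsum0.mul_right e)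
    set d : ℝ := 1 + t ^ 2 - 2 * t * x with hddef
    have hd0 : d ≠ 0 := ne_of_gt hd
    have hsxC : (s : ℂ) ^ 2 + (x : ℂ) ^ 2 = 1 := by exact_mod_cast hsx
    set C : ℂ := 1 - (t : ℂ) * ((x : ℂ) - (s : ℂ) * Complex.I) with hCdef
    have hc1 : (1 - w) * C = (d : ℂ) := by
      rw [hwdef, heval, hCdef, hddef]
      push_cast
      linear_combination (t:ℂ) ^ 2 * hsxC + (-(t:ℂ) ^ 2 * (s:ℂ) ^ 2) * Complex.I_sq
    have hc2 : e * C ^ 2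
        = ((x : ℂ) - 2 * t + t ^ 2 * x) + ((1 - (t : ℂ) ^ 2) * (s : ℂ)) * Complex.I := by
      rw [heval, hCdef]
      linear_combination (-2 * (t:ℂ) + (t:ℂ) ^ 2 * (x:ℂ) - (t:ℂ) ^ 2 * (s:ℂ) * Complex.I) * hsxC
        + (s:ℂ) ^ 2 * (2 * (t:ℂ) - (t:ℂ) ^ 2 * (x:ℂ) + (t:ℂ) ^ 2 * (s:ℂ) * Complex.I)
          * Complex.I_sq
    have hval : 1 / (1 - w) ^ 2 * e
        = (((x : ℂ) - 2 * t + t ^ 2 * x) + ((1 - (t : ℂ) ^ 2) * (s : ℂ)) * Complex.I)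
            / ((d : ℝ) : ℂ) ^ 2 := by
      rw [one_div, inv_mul_eq_div,
        div_eq_div_iff (pow_ne_zero 2 h1w)
          (pow_ne_zero 2 (by exact_mod_cast hd0 : ((d : ℝ) : ℂ) ≠ 0))]
      linear_combination (-(e * (((d : ℝ) : ℂ) + (1 - w) * C))) * hc1 + (1 - w) ^ 2 * hc2
    have him : (1 / (1 - w) ^ 2 * e).im = (1 - t ^ 2) * s / d ^ 2 := by
      rw [hval,
        show (((x : ℂ) - 2 * t + t ^ 2 * x) + ((1 - (t : ℂ) ^ 2) * (s : ℂ)) * Complex.I)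
            = ((x - 2 * t + t ^ 2 * x : ℝ) : ℂ) + (((1 - t ^ 2) * s : ℝ) : ℂ) * Complex.I by
          push_cast; ring,
        show ((d : ℝ) : ℂ) ^ 2 = ((d ^ 2 : ℝ) : ℂ) by push_cast; ring,
        Complex.div_ofReal_im]
      simp [sq, Complex.mul_im, Complex.mul_re]
    have hterm : ∀ n : ℕ, (((n : ℂ) + 1) * w ^ n * e).im
        = ((n : ℝ) + 1) * t ^ n * ((Polynomial.Chebyshev.U ℝ (n : ℤ)).eval x) * s := by
      intro n
      have hexp : Complex.exp ((((n : ℝ) + 1) * θ : ℝ) * Complex.I) = e ^ (n + 1) := by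
        rw [he, ← Complex.exp_nat_mul]
        congr 1
        push_cast
        ring
      have h1 : ((n : ℂ) + 1) * w ^ n * e
          = ((((n : ℝ) + 1) * t ^ n : ℝ) : ℂ)
            * Complex.exp ((((n : ℝ) + 1) * θ : ℝ) * Complex.I) := by
        rw [hexp, hwdef]
        push_cast
        ring
      rw [h1, Complex.im_ofReal_mul, Complex.exp_ofReal_mul_I_im]
      have hU := Polynomial.Chebyshev.U_real_cos θ (n : ℤ)
      rw [hcos] at hU
      have : (((n : ℤ) : ℝ) + 1) * θ = ((n : ℝ) + 1) * θ := by push_cast; ring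
      rw [this] at hU
      rw [← hU]
      ring
    rw [funext hterm, him] at hsum2
    have hfin := hsum2.mul_right s⁻¹
    have e1 : (fun n : ℕ => ((n : ℝ) + 1) * t ^ n * ((Polynomial.Chebyshev.U ℝ (n : ℤ)).eval x)
          * s * s⁻¹)
        = fun n : ℕ => ((n : ℝ) + 1) * t ^ n * ((Polynomial.Chebyshev.U ℝ (n : ℤ)).eval x) := by
      funext n
      rw [mul_assoc, mul_inv_cancel₀ hs, mul_one]
    have e2 : (1 - t ^ 2) * s / d ^ 2 * s⁻¹ = (1 - t ^ 2) / d ^ 2 := by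
      field_simp
    rw [e1, e2] at hfin
    exact hfin
end
end

section
/- Let B ∈ ℝ^{m×m} be symmetric positive definite, let 0 ≤ k < m−1, let E_k ∈ ℝ^{m×(k+1)} consist of the first k+1 columns of the m×m identity matrix, and let B_k = E_kᵀ·B·E_k be the leading (k+1)×(k+1) principal submatrix of B. Let β ∈ ℝ, b = β·e₁ ∈ ℝ^m, x = B^{−1}·b, and x_k = E_k·B_k^{−1}·E_kᵀ·b. Then (x − x_k)ᵀ·B·(x − x_k) = β²·(e₁ᵀ·B^{−1}·e₁ − e₁ᵀ·B_k^{−1}·e₁). -/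
open Matrix

noncomputable section

/-- Galerkin-error identity: for a symmetric positive definite `B`, `b = β e₁`, `x = B⁻¹ b`
and the Galerkin approximation `x_k = E_k B_k⁻¹ E_kᵀ b` from the span of the first `k+1`
coordinate vectors (`B_k = E_kᵀ B E_k` the leading principal submatrix), one has
`(x − x_k)ᵀ B (x − x_k) = β² (e₁ᵀ B⁻¹ e₁ − e₁ᵀ B_k⁻¹ e₁)`. -/
theorem stmt_10 {m k : ℕ} (hk : k + 1 < m)
    (B : Matrix (Fin m) (Fin m) ℝ) (hBsymm : B.IsSymm) (hBpd : B.PosDef)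
    (E : Matrix (Fin m) (Fin (k + 1)) ℝ)
    (hE : ∀ (i : Fin m) (j : Fin (k + 1)), E i j = if (i : ℕ) = (j : ℕ) then 1 else 0)
    (Bk : Matrix (Fin (k + 1)) (Fin (k + 1)) ℝ) (hBk : Bk = Eᵀ * B * E)
    (β : ℝ) (b : Fin m → ℝ)
    (e1m : Fin m → ℝ) (he1m : e1m = fun i : Fin m => if (i : ℕ) = 0 then (1 : ℝ) else 0)
    (e1k : Fin (k + 1) → ℝ) (he1k : e1k = fun i : Fin (k + 1) => if (i : ℕ) = 0 then (1 : ℝ) else 0)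
    (hb : b = β • e1m)
    (x : Fin m → ℝ) (hx : x = B⁻¹.mulVec b)
    (xk : Fin m → ℝ) (hxk : xk = E.mulVec (Bk⁻¹.mulVec (Eᵀ.mulVec b))) :
    (x - xk) ⬝ᵥ B.mulVec (x - xk) =
      β ^ 2 * (e1m ⬝ᵥ B⁻¹.mulVec e1m - e1k ⬝ᵥ Bk⁻¹.mulVec e1k) := by
  -- E.mulVec recovers the vector in the first k+1 coordinates
  have hEmul : ∀ (v : Fin (k+1) → ℝ) (j : Fin (k+1)),
      E.mulVec v ⟨(j:ℕ), lt_trans j.2 hk⟩ = v j := by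
    intro v j
    simp only [mulVec, dotProduct, hE]
    rw [Finset.sum_eq_single j]
    · simp
    · intro c _ hc
      have : ¬ ((j:ℕ) = (c:ℕ)) := fun h => hc (Fin.ext h.symm)
      simp [this]
    · simp
  have hEinj : Function.Injective E.mulVec := by
    intro v w h
    funext j
    have := congrFun h ⟨(j:ℕ), lt_trans j.2 hk⟩
    rwa [hEmul, hEmul] at this
  -- Bk is positive definite
  have hBkpd : Bk.PosDef := by
    rw [hBk, posDef_iff_dotProduct_mulVec]
    constructor
    · rw [IsHermitian, conjTranspose_eq_transpose_of_trivial, transpose_mul,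
        transpose_mul, transpose_transpose, hBsymm.eq, Matrix.mul_assoc]
    · intro v hv
      have hEv : E.mulVec v ≠ 0 := fun h => hv (hEinj (h.trans (Matrix.mulVec_zero E).symm))
      have h2 := hBpd.dotProduct_mulVec_pos hEv
      simp only [star_trivial, RCLike.re_to_real] at h2 ⊢
      have heq : v ⬝ᵥ (Eᵀ * B * E).mulVec v = (E.mulVec v) ⬝ᵥ B.mulVec (E.mulVec v) := by
        rw [← mulVec_mulVec, ← mulVec_mulVec, dotProduct_mulVec, vecMul_transpose]
      rw [heq]
      exact h2
  have hBdet : IsUnit B.det := hBpd.det_pos.ne'.isUnit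
  have hBkdet : IsUnit Bk.det := hBkpd.det_pos.ne'.isUnit
  -- basic solved-system identities
  have hBx : B.mulVec x = b := by
    rw [hx, mulVec_mulVec, Matrix.mul_nonsing_inv B hBdet, one_mulVec]
  set c : Fin (k+1) → ℝ := Eᵀ.mulVec b with hc
  set y : Fin (k+1) → ℝ := Bk⁻¹.mulVec c with hy
  have hxk' : xk = E.mulVec y := hxk
  have hBky : Bk.mulVec y = c := by
    rw [hy, mulVec_mulVec, Matrix.mul_nonsing_inv Bk hBkdet, one_mulVec]
  -- symmetry of B for moving it across dot products
  have hsymmdot : ∀ v w : Fin m → ℝ, v ⬝ᵥ B.mulVec w = B.mulVec v ⬝ᵥ w := by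
    intro v w
    rw [dotProduct_mulVec, ← vecMul_transpose, hBsymm.eq]
  have hEdot : ∀ (z : Fin (k+1) → ℝ) (w : Fin m → ℝ),
      (E.mulVec z) ⬝ᵥ w = z ⬝ᵥ (Eᵀ.mulVec w) := by
    intro z w
    rw [dotProduct_comm, dotProduct_mulVec, ← mulVec_transpose, dotProduct_comm]
  -- xk ⬝ B xk = y ⬝ c
  have hxkBxk : xk ⬝ᵥ B.mulVec xk = y ⬝ᵥ c := by
    rw [hxk', hEdot, mulVec_mulVec, mulVec_mulVec, ← hBk, hBky]
  have hxkb : xk ⬝ᵥ b = y ⬝ᵥ c := by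
    rw [hxk', hEdot]
  -- expand the quadratic form
  have expand : (x - xk) ⬝ᵥ B.mulVec (x - xk)
      = x ⬝ᵥ b - xk ⬝ᵥ b - (xk ⬝ᵥ b - y ⬝ᵥ c) := by
    rw [Matrix.mulVec_sub, dotProduct_sub, sub_dotProduct, sub_dotProduct]
    have h1 : x ⬝ᵥ B.mulVec x = x ⬝ᵥ b := by rw [hBx]
    have h2 : xk ⬝ᵥ B.mulVec x = xk ⬝ᵥ b := by rw [hBx]
    have h3 : x ⬝ᵥ B.mulVec xk = xk ⬝ᵥ b := by rw [hsymmdot, hBx, dotProduct_comm]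
    rw [h1, h2, h3, hxkBxk]
  rw [expand, hxkb]
  -- now compute the two terms with b = β • e1m
  have hEe1 : Eᵀ.mulVec e1m = e1k := by
    funext j
    simp only [mulVec, dotProduct, transpose_apply, hE, he1m, he1k]
    rw [Finset.sum_eq_single (⟨0, lt_trans (Nat.succ_pos k) hk⟩ : Fin m)]
    · simp [eq_comm]
    · intro i _ hi
      have : ¬ ((i:ℕ) = 0) := fun h => hi (Fin.ext h)
      simp [this]
    · simp
  have hcval : c = β • e1k := by
    rw [hc, hb, Matrix.mulVec_smul, hEe1]
  have hxb : x ⬝ᵥ b = β ^ 2 * (e1m ⬝ᵥ B⁻¹.mulVec e1m) := by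
    rw [hx, hb, Matrix.mulVec_smul, smul_dotProduct, dotProduct_smul, dotProduct_comm]
    simp only [smul_eq_mul]
    ring
  have hyc : y ⬝ᵥ c = β ^ 2 * (e1k ⬝ᵥ Bk⁻¹.mulVec e1k) := by
    rw [hy, hcval, Matrix.mulVec_smul, smul_dotProduct, dotProduct_smul, dotProduct_comm]
    simp only [smul_eq_mul]
    ring
  rw [hxb, hyc]
  ring
end
end
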